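/- Assume the constant C_Γ in the definition of B_D is large enough, depending only on n. Let D be a v-cube with ℓ(D) = 2^{−j} (j ∈ ℤ), let x ∈ supp μ ∩ D, let 2^{−j−1} ≤ ε ≤ δ < 2^{−j}, and let σ := c H^n_L for any constant c ≥ 0 and any n-plane L in ℝ^d. Then |∫ (φ_ε(x−y) − φ_δ(x−y)) K(x−y) d(μ−σ)(y)| ≤ C 2^{j(n+2)} (δ−ε) dist_{B_D}(μ, σ), where C depends only on n, d, K and φ_ℝ. -/

import Mathlib

open MeasureTheory Set Filter ENNReal NNReal

noncomputable section

/-- Euclidean space `ℝ^k`. -/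
abbrev Euc (k : ℕ) : Type := EuclideanSpace ℝ (Fin k)

/-- Projection `x ↦ x̃` onto the first `n` coordinates. -/
def projn (n d : ℕ) (h : n ≤ d) (x : Euc d) : Euc n := WithLp.toLp 2 (fun i => x (Fin.castLE h i))

/-- An odd Calderón–Zygmund kernel of homogeneity `-n` on `ℝ^d`, with constant `CK`. -/
structure IsCZKernel (n d : ℕ) (CK : ℝ) (K : Euc d → ℝ) : Prop where
  pos : 0 < CK
  odd : ∀ x : Euc d, K (-x) = -K x
  diff : ∀ x : Euc d, x ≠ 0 → DifferentiableAt ℝ K x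
  diff2 : ∀ x : Euc d, x ≠ 0 → DifferentiableAt ℝ (fderiv ℝ K) x
  bound : ∀ x : Euc d, x ≠ 0 → |K x| ≤ CK / ‖x‖ ^ n
  fderiv_bound : ∀ x : Euc d, x ≠ 0 → ‖fderiv ℝ K x‖ ≤ CK / ‖x‖ ^ (n + 1)
  fderiv2_bound : ∀ x : Euc d, x ≠ 0 → ‖fderiv ℝ (fderiv ℝ K) x‖ ≤ CK / ‖x‖ ^ (n + 2)

/-- The smooth truncation profile `φ_ℝ`: a nondecreasing `C²` function with
`χ_{[3√n,∞)} ≤ φ_ℝ ≤ χ_{[2.1√n,∞)}` (extended by `0` to all of `ℝ`). -/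
structure IsCutoff (n : ℕ) (φR : ℝ → ℝ) : Prop where
  mono : Monotone φR
  smooth : ContDiff ℝ 2 φR
  nonneg : ∀ t : ℝ, 0 ≤ φR t
  le_one : ∀ t : ℝ, φR t ≤ 1
  eq_zero : ∀ t : ℝ, t < 2.1 * Real.sqrt n → φR t = 0
  eq_one : ∀ t : ℝ, 3 * Real.sqrt n ≤ t → φR t = 1

/-- `φ_ε(x) = φ_ℝ(|x̃|/ε)`. -/
def phiE (n d : ℕ) (h : n ≤ d) (φR : ℝ → ℝ) (ε : ℝ) (x : Euc d) : ℝ :=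
  φR (‖projn n d h x‖ / ε)

/-- The map `u ↦ (u, A u)` from `ℝⁿ` to `ℝ^d`. -/
def graphMap (n d : ℕ) (h : n ≤ d) (A : Euc n → Euc (d - n)) (u : Euc n) : Euc d :=
  WithLp.toLp 2 (fun i : Fin d => if hi : (i : ℕ) < n then u ⟨i, hi⟩
           else A u ⟨(i : ℕ) - n, by have := i.isLt; omega⟩)

/-- The graph `Γ` of `A`. -/
def graphSet (n d : ℕ) (h : n ≤ d) (A : Euc n → Euc (d - n)) : Set (Euc d) :=
  Set.range (graphMap n d h A)

/-- `H^n` restricted to the graph of `A`. -/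
def graphMeasure (n d : ℕ) (h : n ≤ d) (A : Euc n → Euc (d - n)) : Measure (Euc d) :=
  (μH[(n : ℝ)]).restrict (graphSet n d h A)

/-- The measure `f · H^n_Γ`. -/
def lipGraphMeasure (n d : ℕ) (h : n ≤ d) (A : Euc n → Euc (d - n)) (f : Euc d → ℝ) :
    Measure (Euc d) :=
  (graphMeasure n d h A).withDensity fun y => ENNReal.ofReal (f y)

/-- The smoothly truncated singular integral `T^ν_{φ_ε} f(x) = ∫ φ_ε(x-y) K(x-y) f(y) dν(y)`. -/
def Tphi (n d : ℕ) (h : n ≤ d) (φR : ℝ → ℝ) (K : Euc d → ℝ) (ν : Measure (Euc d))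
    (f : Euc d → ℝ) (ε : ℝ) (x : Euc d) : ℝ :=
  ∫ y, phiE n d h φR ε (x - y) * K (x - y) * f y ∂ν

/-- The `ρ`-variation of a family `G = {G ε}_{ε > 0}`. -/
def varRho (ρ : ℝ) (G : ℝ → ℝ) : ℝ≥0∞ :=
  ⨆ (ε : ℤ → ℝ) (_ : Antitone ε) (_ : ∀ m : ℤ, 0 < ε m),
    (∑' m : ℤ, (ENNReal.ofReal |G (ε (m + 1)) - G (ε m)|) ^ ρ) ^ (1 / ρ)

/-- The oscillation of a family `G = {G ε}_{ε > 0}` with respect to a fixed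
sequence `r`. -/
def oscO (r : ℤ → ℝ) (G : ℝ → ℝ) : ℝ≥0∞ :=
  ⨆ (ε : ℤ → ℝ) (δ : ℤ → ℝ)
    (_ : ∀ m : ℤ, r (m + 1) ≤ ε m ∧ ε m ≤ δ m ∧ δ m ≤ r m),
    (∑' m : ℤ, (ENNReal.ofReal |G (ε m) - G (δ m)|) ^ (2 : ℝ)) ^ (1 / 2 : ℝ)

/-- The `λ`-jump counting function of a family `G = {G ε}_{ε > 0}`. -/
def jumpN (lam : ℝ) (G : ℝ → ℝ) : ℝ≥0∞ :=
  ⨆ (N : ℕ) (_ : ∃ ε δ : ℕ → ℝ,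
      (∀ i, i < N → 0 < ε i) ∧ (∀ i, i < N → ε i < δ i) ∧
      (∀ i, i + 1 < N → δ i ≤ ε (i + 1)) ∧
      (∀ i, i < N → lam < |G (ε i) - G (δ i)|)), (N : ℝ≥0∞)

/-- The `ρ`-variation of a `ℤ`-indexed family. -/
def varRhoZ (ρ : ℝ) (G : ℤ → ℝ) : ℝ≥0∞ :=
  ⨆ (mk : ℤ → ℤ) (_ : Antitone mk),
    (∑' k : ℤ, (ENNReal.ofReal |G (mk (k + 1)) - G (mk k)|) ^ ρ) ^ (1 / ρ)

/-- The oscillation of a `ℤ`-indexed family with respect to a fixed integer sequence `r`. -/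
def oscZ (r : ℤ → ℤ) (G : ℤ → ℝ) : ℝ≥0∞ :=
  ⨆ (ε : ℤ → ℤ) (δ : ℤ → ℤ)
    (_ : ∀ m : ℤ, r (m + 1) ≤ ε m ∧ ε m ≤ δ m ∧ δ m ≤ r m),
    (∑' m : ℤ, (ENNReal.ofReal |G (ε m) - G (δ m)|) ^ (2 : ℝ)) ^ (1 / 2 : ℝ)

/-- A cube `a + [0,b)^n ⊆ ℝⁿ`. -/
def cubeSet (n : ℕ) (a : Euc n) (b : ℝ) : Set (Euc n) :=
  {u | ∀ i : Fin n, a i ≤ u i ∧ u i < a i + b}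

/-- A "vertical" cube `D = D̃ × ℝ^{d-n}`, `D̃` a cube of `ℝⁿ`. -/
def IsVCube (n d : ℕ) (h : n ≤ d) (D : Set (Euc d)) : Prop :=
  ∃ (a : Euc n) (b : ℝ), 0 < b ∧ D = {x : Euc d | projn n d h x ∈ cubeSet n a b}

/-- The half-open v-cube with center `z` (in `ℝⁿ`) and side length `ℓ`. -/
def vQ (n d : ℕ) (h : n ≤ d) (z : Euc n) (ℓ : ℝ) : Set (Euc d) :=
  {x : Euc d | ∀ i : Fin n,
    z i - ℓ / 2 ≤ projn n d h x i ∧ projn n d h x i < z i + ℓ / 2}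

/-- The cylinder `B(z̃_Q, C_Γ ℓ(Q)) × ℝ^{d-n}` associated with the v-cube of center `z`
and side length `ℓ`. -/
def BQ (n d : ℕ) (h : n ≤ d) (CΓ : ℝ) (z : Euc n) (ℓ : ℝ) : Set (Euc d) :=
  {x : Euc d | dist (projn n d h x) z ≤ CΓ * ℓ}

/-- The grid cube `D_m^a = (a + [0, 2^{-m})^n) × ℝ^{d-n}`. -/
def Dgrid (n d : ℕ) (h : n ≤ d) (a : Euc n) (m : ℤ) : Set (Euc d) :=
  {x : Euc d | projn n d h x ∈ cubeSet n a ((2 : ℝ) ^ (-m))}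

/-- The center of the dyadic cube `2^{-m}(k + [0,1)^n)`. -/
def dyadicCenter (n : ℕ) (m : ℤ) (k : Fin n → ℤ) : Euc n :=
  WithLp.toLp 2 (fun i => ((k i : ℝ) + 1 / 2) * (2 : ℝ) ^ (-m))

/-- `∫_{D^c} K(z-y) dν(y)`, understood as `lim_{M→∞} ∫_{D^c ∩ {|z-y|<M}} K(z-y) dν(y)`. -/
def Ktail (d : ℕ) (K : Euc d → ℝ) (ν : Measure (Euc d)) (D : Set (Euc d)) (z : Euc d) : ℝ :=
  limUnder atTop fun M : ℝ => ∫ y in Dᶜ ∩ Metric.ball z M, K (z - y) ∂ν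

/-- `E_D ν = ν(D)⁻¹ ∫_D ∫_{D^c} K(z-y) dν(y) dν(z)`. -/
def cubeAvg (d : ℕ) (K : Euc d → ℝ) (ν : Measure (Euc d)) (D : Set (Euc d)) : ℝ :=
  ((ν D).toReal)⁻¹ * ∫ z in D, Ktail d K ν D z ∂ν

/-- The averaged martingale `E_m ν(x) = 2^{mn} ∫_{{a : x ∈ D_m^a}} E_{D_m^a} ν da`. -/
def Em (n d : ℕ) (h : n ≤ d) (K : Euc d → ℝ) (ν : Measure (Euc d)) (m : ℤ) (x : Euc d) : ℝ :=
  (2 : ℝ) ^ (m * (n : ℤ)) *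
    ∫ a in {a : Euc n | x ∈ Dgrid n d h a m},
      cubeAvg d K ν (Dgrid n d h a m) ∂(volume : Measure (Euc n))

/-- `Λ_m^ν(x,z;y) = 2^{mn} ∫_{{a : x,z ∈ D_m^a, y ∉ D_m^a}} ν(D_m^a)⁻¹ da`. -/
def LambdaM (n d : ℕ) (h : n ≤ d) (ν : Measure (Euc d)) (m : ℤ) (x z y : Euc d) : ℝ :=
  (2 : ℝ) ^ (m * (n : ℤ)) *
    ∫ a in {a : Euc n |
        x ∈ Dgrid n d h a m ∧ z ∈ Dgrid n d h a m ∧ y ∉ Dgrid n d h a m},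
      ((ν (Dgrid n d h a m)).toReal)⁻¹ ∂(volume : Measure (Euc n))

/-- The doubly truncated maximal singular integral
`T_*ν(x) = sup_{0<ε<M} |∫_{ε<|x-y|<M} K(x-y) dν(y)|`. -/
def Tstar (d : ℕ) (K : Euc d → ℝ) (ν : Measure (Euc d)) (x : Euc d) : ℝ≥0∞ :=
  ⨆ (ε : ℝ) (M : ℝ) (_ : 0 < ε) (_ : ε < M),
    ENNReal.ofReal |∫ y in {y : Euc d | ε < dist x y ∧ dist x y < M}, K (x - y) ∂ν|

/-- `(Kφ_ε ∗ ν)(x)`, understood as `lim_{M→∞} ∫_{|x-y|<M} φ_ε(x-y) K(x-y) dν(y)`. -/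
def KphiM (n d : ℕ) (h : n ≤ d) (φR : ℝ → ℝ) (K : Euc d → ℝ) (ν : Measure (Euc d))
    (ε : ℝ) (x : Euc d) : ℝ :=
  limUnder atTop fun M : ℝ =>
    ∫ y in Metric.ball x M, phiE n d h φR ε (x - y) * K (x - y) ∂ν

/-- An (affine) `n`-plane in `ℝ^d`. -/
def IsNPlane (n d : ℕ) (L : Set (Euc d)) : Prop :=
  ∃ (p : Euc d) (φ : Euc n →ₗᵢ[ℝ] Euc d), L = Set.range fun u => p + φ u

/-- The localized Wasserstein-type distance
`dist_F(σ,ν) = sup {|∫ g dσ - ∫ g dν| : Lip(g) ≤ 1, supp g ⊆ F}`. -/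
def wdist (d : ℕ) (F : Set (Euc d)) (σ ν : Measure (Euc d)) : ℝ≥0∞ :=
  ⨆ (g : Euc d → ℝ) (_ : LipschitzWith 1 g) (_ : Function.support g ⊆ F),
    ENNReal.ofReal |(∫ y, g y ∂σ) - ∫ y, g y ∂ν|

/-- The (topological) support of a measure. -/
def msupport (d : ℕ) (μ : Measure (Euc d)) : Set (Euc d) :=
  {x : Euc d | ∀ U : Set (Euc d), IsOpen U → x ∈ U → 0 < μ U}

open Classical in
/-- The coefficient `α_μ(Q)` of the v-cube `Q` with center `z` and side length `ℓ`. -/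
def alphaC (n d : ℕ) (h : n ≤ d) (CΓ : ℝ) (μ : Measure (Euc d)) (z : Euc n) (ℓ : ℝ) :
    ℝ≥0∞ :=
  if vQ n d h z ℓ ∩ msupport d μ = ∅ then 0
  else (ENNReal.ofReal (ℓ ^ (n + 1)))⁻¹ *
    ⨅ (c : ℝ≥0) (L : Set (Euc d)) (_ : IsNPlane n d L),
      wdist d (BQ n d h CΓ z ℓ) μ ((c : ℝ≥0∞) • (μH[(n : ℝ)]).restrict L)

/-- The coefficient `β_{2,μ}(Q)` of the v-cube `Q` with center `z` and side length `ℓ`. -/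
def beta2 (n d : ℕ) (h : n ≤ d) (CΓ : ℝ) (μ : Measure (Euc d)) (z : Euc n) (ℓ : ℝ) :
    ℝ≥0∞ :=
  ⨅ (L : Set (Euc d)) (_ : IsNPlane n d L),
    ((ENNReal.ofReal (ℓ ^ n))⁻¹ *
      ∫⁻ y in vQ n d h z (CΓ * ℓ),
        ENNReal.ofReal ((Metric.infDist y L / ℓ) ^ 2) ∂μ) ^ (1 / 2 : ℝ)

/-- The average `m_Q(g) = μ(Q)⁻¹ ∫_Q g dμ`. -/
def mAvg (d : ℕ) (μ : Measure (Euc d)) (Q : Set (Euc d)) (g : Euc d → ℝ) : ℝ :=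
  ((μ Q).toReal)⁻¹ * ∫ y in Q, g y ∂μ

/-- The Hardy–Littlewood maximal operator over v-cubes. -/
def maxHL (n d : ℕ) (h : n ≤ d) (μ : Measure (Euc d)) (g : Euc d → ℝ) (x : Euc d) : ℝ≥0∞ :=
  ⨆ (Q : Set (Euc d)) (_ : IsVCube n d h Q) (_ : x ∈ Q),
    ENNReal.ofReal (mAvg d μ Q fun y => |g y|)

/-- The sharp maximal operator over v-cubes. -/
def maxSharp (n d : ℕ) (h : n ≤ d) (μ : Measure (Euc d)) (g : Euc d → ℝ) (x : Euc d) :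
    ℝ≥0∞ :=
  ⨆ (Q : Set (Euc d)) (_ : IsVCube n d h Q) (_ : x ∈ Q),
    ENNReal.ofReal (mAvg d μ Q fun y => |g y - mAvg d μ Q g|)

/-- The centered Hardy–Littlewood maximal operator `M^ν`. -/
def maxB (d : ℕ) (ν : Measure (Euc d)) (f : Euc d → ℝ) (x : Euc d) : ℝ≥0∞ :=
  ⨆ (r : ℝ) (_ : 0 < r),
    (ν (Metric.ball x r))⁻¹ * ∫⁻ y in Metric.ball x r, ENNReal.ofReal |f y| ∂ν

/-! `F w := (φ_ε(w) - φ_δ(w)) K(w)` vanishes unless `2.1 √n ε ≤ |w̃| < 3 √n δ`, and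
`ε, δ ≈ 2^{-j}`. Writing `φ_ε - φ_δ = g(|w̃|)` with `g t = φ_ℝ(t/ε) - φ_ℝ(t/δ)`, the profile `g` is
`≲ (δ - ε) 2^{2j}`-Lipschitz, while `K` and `DK` are `≲ 2^{jn}` and `≲ 2^{j(n+1)}` where `F ≠ 0`.
Hence `F` is Lipschitz with constant `≲ 2^{j(n+2)} (δ - ε)`, and `y ↦ F(x - y)` is supported in
`B_D` because `x ∈ D`; divided by that constant it is a test function for `dist_{B_D}(μ, σ)`. -/

open Topology

namespace IsCutoff

variable {n : ℕ} {φR : ℝ → ℝ}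

lemma deriv_eq_zero_of_lt (hφ : IsCutoff n φR) {t : ℝ} (ht : t < 2.1 * √n) :
    deriv φR t = 0 := by
  have : φR =ᶠ[𝓝 t] fun _ => 0 := eventually_of_mem (Iio_mem_nhds ht) fun u hu => hφ.eq_zero u hu
  rw [this.deriv_eq, deriv_const]

lemma deriv_eq_zero_of_gt (hφ : IsCutoff n φR) {t : ℝ} (ht : 3 * √n < t) :
    deriv φR t = 0 := by
  have : φR =ᶠ[𝓝 t] fun _ => 1 :=
    eventually_of_mem (Ioi_mem_nhds ht) fun u hu => hφ.eq_one u (le_of_lt hu)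
  rw [this.deriv_eq, deriv_const]

lemma hasCompactSupport_deriv (hφ : IsCutoff n φR) : HasCompactSupport (deriv φR) :=
  HasCompactSupport.intro (isCompact_Icc (a := 2.1 * √n) (b := 3 * √n)) fun t ht => by
    rcases not_and_or.mp ht with h | h
    · exact hφ.deriv_eq_zero_of_lt (not_le.mp h)
    · exact hφ.deriv_eq_zero_of_gt (not_le.mp h)

lemma exists_lipschitzWith_mul_deriv (hφ : IsCutoff n φR) :
    ∃ L, LipschitzWith L fun u => u * deriv φR u :=
  ContDiff.lipschitzWith_of_hasCompactSupport (n := 1) hφ.hasCompactSupport_deriv.mul_left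
    (contDiff_id.mul (show ContDiff ℝ (1 + 1) φR from hφ.smooth).deriv') one_ne_zero

lemma sub_comp_div_eq_zero_of_lt (hφ : IsCutoff n φR) {ε δ t : ℝ} (hε : 0 < ε) (hεδ : ε ≤ δ)
    (ht : t < 2.1 * √n * ε) : φR (t / ε) - φR (t / δ) = 0 := by
  have hε' : t / ε < 2.1 * √n := (div_lt_iff₀ hε).mpr ht
  have hδ' : t / δ < 2.1 * √n := by
    rcases lt_or_ge t 0 with h | h
    · exact (div_neg_of_neg_of_pos h (hε.trans_le hεδ)).trans_le (by positivity)
    · exact (div_le_div_of_nonneg_left h hε hεδ).trans_lt hε'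
  rw [hφ.eq_zero _ hε', hφ.eq_zero _ hδ', sub_self]

lemma sub_comp_div_eq_zero_of_le (hφ : IsCutoff n φR) {ε δ t : ℝ} (hε : 0 < ε) (hεδ : ε ≤ δ)
    (ht : 3 * √n * δ ≤ t) : φR (t / ε) - φR (t / δ) = 0 := by
  have hδ' : 3 * √n ≤ t / δ := (le_div_iff₀ (hε.trans_le hεδ)).mpr ht
  have ht₀ : 0 ≤ t := (mul_nonneg (by positivity) (hε.le.trans hεδ)).trans ht
  have hε' : 3 * √n ≤ t / ε := hδ'.trans (div_le_div_of_nonneg_left ht₀ hε hεδ)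
  rw [hφ.eq_one _ hε', hφ.eq_one _ hδ', sub_self]

lemma norm_projn_lt_of_phiE_sub_mul_ne_zero (hφ : IsCutoff n φR) {d : ℕ} (hnd : n ≤ d)
    {K : Euc d → ℝ} {ε δ : ℝ} (hε : 0 < ε) (hεδ : ε ≤ δ) {w : Euc d}
    (hw : (phiE n d hnd φR ε w - phiE n d hnd φR δ w) * K w ≠ 0) :
    ‖projn n d hnd w‖ < 3 * √n * δ := by
  by_contra! h
  exact hw (by rw [phiE, phiE, hφ.sub_comp_div_eq_zero_of_le hε hεδ h, zero_mul])

end IsCutoff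

lemma lipschitzWith_sub_comp_div {φ : ℝ → ℝ} (hφ : Differentiable ℝ φ) {L : ℝ≥0}
    (hL : LipschitzWith L fun u => u * deriv φ u) (h0 : deriv φ 0 = 0) {ε δ : ℝ}
    (hε : 0 < ε) (hδ : 0 < δ) :
    LipschitzWith (L * ‖ε⁻¹ - δ⁻¹‖₊) fun t => φ (t / ε) - φ (t / δ) := by
  have hasDeriv (t : ℝ) : HasDerivAt (fun t => φ (t / ε) - φ (t / δ))
      (deriv φ (t / ε) * ε⁻¹ - deriv φ (t / δ) * δ⁻¹) t := by
    have hcomp (c : ℝ) : HasDerivAt (fun t => φ (t / c)) (deriv φ (t / c) * c⁻¹) t := by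
      simpa [Function.comp_def] using (hφ (t / c)).hasDerivAt.comp t ((hasDerivAt_id t).div_const c)
    exact (hcomp ε).sub (hcomp δ)
  refine lipschitzWith_of_nnnorm_deriv_le (fun t => (hasDeriv t).differentiableAt) fun t => ?_
  rw [← NNReal.coe_le_coe, coe_nnnorm, (hasDeriv t).deriv, NNReal.coe_mul, coe_nnnorm,
    Real.norm_eq_abs, Real.norm_eq_abs]
  rcases eq_or_ne t 0 with rfl | ht
  · simp only [zero_div, h0, zero_mul, sub_self, abs_zero]; positivity
  -- `φ'(t/c) c⁻¹ = ψ(t/c) / t` with `ψ u = u φ'(u)`, and `ψ` is `L`-Lipschitz.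
  have hrewrite : deriv φ (t / ε) * ε⁻¹ - deriv φ (t / δ) * δ⁻¹
      = (t / ε * deriv φ (t / ε) - t / δ * deriv φ (t / δ)) / t := by
    field_simp
  have hψ := hL.dist_le_mul (t / ε) (t / δ)
  rw [Real.dist_eq, Real.dist_eq] at hψ
  rw [hrewrite, abs_div, div_le_iff₀ (abs_pos.mpr ht)]
  calc _ ≤ L * |t / ε - t / δ| := hψ
    _ = L * |ε⁻¹ - δ⁻¹| * |t| := by
        rw [mul_assoc, ← abs_mul]; congr 2; field_simp

lemma nnnorm_inv_sub_inv_le {r ε δ : ℝ} (hr : 0 < r) (hrε : r ≤ ε) (hεδ : ε ≤ δ) :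
    (‖ε⁻¹ - δ⁻¹‖₊ : ℝ) ≤ (δ - ε) / r ^ 2 := by
  have hε : 0 < ε := hr.trans_le hrε
  have hδ : 0 < δ := hε.trans_le hεδ
  have : ε⁻¹ - δ⁻¹ = (δ - ε) / (ε * δ) := by field_simp
  rw [coe_nnnorm, Real.norm_eq_abs, this, abs_div, abs_of_nonneg (sub_nonneg.mpr hεδ),
    abs_of_pos (mul_pos hε hδ)]
  gcongr
  nlinarith

lemma projn_sub (n d : ℕ) (h : n ≤ d) (x y : Euc d) :
    projn n d h (x - y) = projn n d h x - projn n d h y := by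
  ext i; simp [projn]

lemma norm_projn_le (n d : ℕ) (h : n ≤ d) (x : Euc d) : ‖projn n d h x‖ ≤ ‖x‖ := by
  rw [EuclideanSpace.norm_eq, EuclideanSpace.norm_eq]
  apply Real.sqrt_le_sqrt
  calc ∑ i : Fin n, ‖projn n d h x i‖ ^ 2
      = ∑ k ∈ Finset.univ.image (Fin.castLE h), ‖x k‖ ^ 2 := by
        rw [Finset.sum_image fun a _ b _ hab => Fin.castLE_injective h hab]; rfl
    _ ≤ ∑ k : Fin d, ‖x k‖ ^ 2 :=
        Finset.sum_le_sum_of_subset_of_nonneg (Finset.subset_univ _) fun _ _ _ => by positivity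

lemma lipschitzWith_norm_projn (n d : ℕ) (h : n ≤ d) :
    LipschitzWith 1 fun x : Euc d => ‖projn n d h x‖ :=
  LipschitzWith.of_dist_le_mul fun x y => by
    rw [NNReal.coe_one, one_mul, dist_eq_norm x y]
    exact (dist_norm_norm_le _ _).trans (by rw [← projn_sub]; exact norm_projn_le ..)

lemma EuclideanSpace.norm_le_sqrt_card_mul {ι : Type*} [Fintype ι] (v : EuclideanSpace ℝ ι)
    {a : ℝ} (ha : 0 ≤ a) (hv : ∀ i, |v i| ≤ a) : ‖v‖ ≤ √(Fintype.card ι) * a := by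
  rw [EuclideanSpace.norm_eq, ← Real.sqrt_sq ha, ← Real.sqrt_mul (Nat.cast_nonneg _)]
  refine Real.sqrt_le_sqrt ?_
  calc ∑ i, ‖v i‖ ^ 2 ≤ ∑ _i : ι, a ^ 2 :=
        Finset.sum_le_sum fun i _ => pow_le_pow_left₀ (norm_nonneg _) (hv i) 2
    _ = Fintype.card ι * a ^ 2 := by simp

lemma dist_projn_le_of_mem_vQ {n d : ℕ} {h : n ≤ d} {z : Euc n} {ℓ : ℝ} {x : Euc d}
    (hx : x ∈ vQ n d h z ℓ) : dist (projn n d h x) z ≤ √n * (ℓ / 2) := by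
  rcases Nat.eq_zero_or_pos n with rfl | hn
  · simp [Subsingleton.elim (projn 0 d h x) z]
  have hℓ : 0 ≤ ℓ := by linarith [hx ⟨0, hn⟩]
  rw [dist_eq_norm]
  refine (EuclideanSpace.norm_le_sqrt_card_mul (a := ℓ / 2) _ (by positivity) fun i => ?_).trans_eq
    (by rw [Fintype.card_fin])
  rw [PiLp.sub_apply, abs_le]
  constructor <;> linarith [hx i]

lemma mem_BQ_of_mem_vQ {n d : ℕ} {h : n ≤ d} {CΓ ℓ R : ℝ} {z : Euc n} {x y : Euc d}
    (hx : x ∈ vQ n d h z ℓ) (hxy : ‖projn n d h (x - y)‖ ≤ R)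
    (hR : √n * (ℓ / 2) + R ≤ CΓ * ℓ) : y ∈ BQ n d h CΓ z ℓ := by
  have hyx : dist (projn n d h y) (projn n d h x) ≤ R := by
    rwa [dist_comm, dist_eq_norm, ← projn_sub]
  show dist (projn n d h y) z ≤ CΓ * ℓ
  linarith [dist_triangle (projn n d h y) (projn n d h x) z, dist_projn_le_of_mem_vQ hx]

namespace IsCZKernel

variable {n d : ℕ} {CK : ℝ} {K : Euc d → ℝ}

lemma abs_le_of_le_norm (hK : IsCZKernel n d CK K) {r : ℝ} (hr : 0 < r) {w : Euc d}
    (hw : r ≤ ‖w‖) : |K w| ≤ CK / r ^ n :=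
  (hK.bound w (norm_pos_iff.mp (hr.trans_le hw))).trans
    (div_le_div_of_nonneg_left hK.pos.le (pow_pos hr n) (pow_le_pow_left₀ hr.le hw n))

lemma norm_fderiv_le_of_le_norm (hK : IsCZKernel n d CK K) {r : ℝ} (hr : 0 < r) {w : Euc d}
    (hw : r ≤ ‖w‖) : ‖fderiv ℝ K w‖ ≤ CK / r ^ (n + 1) :=
  (hK.fderiv_bound w (norm_pos_iff.mp (hr.trans_le hw))).trans
    (div_le_div_of_nonneg_left hK.pos.le (pow_pos hr _) (pow_le_pow_left₀ hr.le hw _))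

end IsCZKernel

section Singular

variable {E : Type*} [NormedAddCommGroup E] [NormedSpace ℝ E] {K : E → ℝ} {r A B : ℝ}

lemma abs_sub_le_of_norm_fderiv_le_away (hr : 0 < r)
    (hK_diff : ∀ w, r ≤ ‖w‖ → DifferentiableAt ℝ K w)
    (hK_deriv : ∀ w, r ≤ ‖w‖ → ‖fderiv ℝ K w‖ ≤ B) {w₁ w₂ : E}
    (h₁ : 2 * r ≤ ‖w₁‖) (h₁₂ : ‖w₁ - w₂‖ ≤ r) : |K w₁ - K w₂| ≤ B * ‖w₁ - w₂‖ := by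
  have hball : ∀ u ∈ Metric.closedBall w₁ r, r ≤ ‖u‖ := fun u hu => by
    rw [Metric.mem_closedBall, dist_eq_norm] at hu
    linarith [norm_sub_norm_le w₁ u, norm_sub_rev u w₁]
  have hw₂ : w₂ ∈ Metric.closedBall w₁ r := by
    rwa [Metric.mem_closedBall, dist_eq_norm, norm_sub_rev]
  simpa [Real.norm_eq_abs] using (convex_closedBall w₁ r).norm_image_sub_le_of_norm_fderiv_le
    (fun u hu => hK_diff u (hball u hu)) (fun u hu => hK_deriv u (hball u hu))
    hw₂ (Metric.mem_closedBall_self hr.le)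

variable {Δ : E → ℝ} {a : ℝ} {b : ℝ≥0}

/-- Near the diagonal the product rule is used, far from it the trivial bound `2 a A`. -/
lemma abs_mul_sub_mul_le_of_ne_zero (hr : 0 < r) (hΔ_le : ∀ w, |Δ w| ≤ a)
    (hΔ : LipschitzWith b Δ) (hΔ_zero : ∀ w, ‖w‖ < 2 * r → Δ w = 0)
    (hK_diff : ∀ w, r ≤ ‖w‖ → DifferentiableAt ℝ K w) (hK_le : ∀ w, r ≤ ‖w‖ → |K w| ≤ A)
    (hK_deriv : ∀ w, r ≤ ‖w‖ → ‖fderiv ℝ K w‖ ≤ B) {w₁ w₂ : E} (hw₁ : Δ w₁ ≠ 0) :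
    |Δ w₁ * K w₁ - Δ w₂ * K w₂| ≤ (2 * a * A / r + a * B + A * b) * ‖w₁ - w₂‖ := by
  have hsupp : ∀ w, Δ w ≠ 0 → 2 * r ≤ ‖w‖ := fun w hw => not_lt.mp fun h => hw (hΔ_zero w h)
  have h₁ := hsupp w₁ hw₁
  have ha : 0 ≤ a := (abs_nonneg _).trans (hΔ_le 0)
  have hA : 0 ≤ A := (abs_nonneg _).trans (hK_le w₁ (by linarith))
  have hB : 0 ≤ B := (norm_nonneg _).trans (hK_deriv w₁ (by linarith))
  have hfar_nonneg : 0 ≤ 2 * a * A / r := by positivity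
  rcases le_or_gt r ‖w₁ - w₂‖ with hfar | hnear
  · have hΔK_le : ∀ w, |Δ w * K w| ≤ a * A := fun w => by
      by_cases hw : Δ w = 0
      · simpa [hw] using mul_nonneg ha hA
      · rw [abs_mul]
        exact mul_le_mul (hΔ_le w) (hK_le w (by linarith [hsupp w hw])) (abs_nonneg _) ha
    calc |Δ w₁ * K w₁ - Δ w₂ * K w₂| ≤ a * A + a * A :=
          (abs_sub _ _).trans (add_le_add (hΔK_le w₁) (hΔK_le w₂))
      _ = 2 * a * A / r * r := by field_simp; ring
      _ ≤ 2 * a * A / r * ‖w₁ - w₂‖ := mul_le_mul_of_nonneg_left hfar hfar_nonneg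
      _ ≤ _ := by gcongr; nlinarith [mul_nonneg ha hB, mul_nonneg hA b.2]
  · have h₂ : r ≤ ‖w₂‖ := by linarith [norm_sub_norm_le w₁ w₂]
    have hKK := abs_sub_le_of_norm_fderiv_le_away hr hK_diff hK_deriv h₁ hnear.le
    have hΔΔ : |Δ w₁ - Δ w₂| ≤ b * ‖w₁ - w₂‖ := by
      simpa [Real.dist_eq, dist_eq_norm] using hΔ.dist_le_mul w₁ w₂
    calc |Δ w₁ * K w₁ - Δ w₂ * K w₂| = |Δ w₁ * (K w₁ - K w₂) + K w₂ * (Δ w₁ - Δ w₂)| := by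
          ring_nf
      _ ≤ a * (B * ‖w₁ - w₂‖) + A * (b * ‖w₁ - w₂‖) := by
          refine (abs_add_le _ _).trans (add_le_add ?_ ?_) <;> rw [abs_mul]
          · exact mul_le_mul (hΔ_le w₁) hKK (abs_nonneg _) ha
          · exact mul_le_mul (hK_le w₂ h₂) hΔΔ (abs_nonneg _) hA
      _ ≤ _ := by nlinarith [norm_nonneg (w₁ - w₂)]

lemma lipschitzWith_mul_of_eq_zero_near_zero (hr : 0 < r) (hΔ_le : ∀ w, |Δ w| ≤ a)
    (hΔ : LipschitzWith b Δ) (hΔ_zero : ∀ w, ‖w‖ < 2 * r → Δ w = 0)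
    (hK_diff : ∀ w, r ≤ ‖w‖ → DifferentiableAt ℝ K w) (hK_le : ∀ w, r ≤ ‖w‖ → |K w| ≤ A)
    (hK_deriv : ∀ w, r ≤ ‖w‖ → ‖fderiv ℝ K w‖ ≤ B) :
    LipschitzWith (2 * a * A / r + a * B + A * b).toNNReal fun w => Δ w * K w := by
  have key {w₁ w₂ : E} (hw₁ : Δ w₁ ≠ 0) :
      |Δ w₁ * K w₁ - Δ w₂ * K w₂| ≤ (2 * a * A / r + a * B + A * b).toNNReal * ‖w₁ - w₂‖ :=
    (abs_mul_sub_mul_le_of_ne_zero hr hΔ_le hΔ hΔ_zero hK_diff hK_le hK_deriv hw₁).trans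
      (mul_le_mul_of_nonneg_right (Real.le_coe_toNNReal _) (norm_nonneg _))
  refine LipschitzWith.of_dist_le_mul fun w₁ w₂ => ?_
  rw [Real.dist_eq, dist_eq_norm]
  by_cases hw₁ : Δ w₁ = 0
  · by_cases hw₂ : Δ w₂ = 0
    · simp only [hw₁, hw₂, zero_mul, sub_self, abs_zero]; positivity
    · rw [abs_sub_comm, norm_sub_rev]; exact key hw₂
  · exact key hw₁

end Singular

lemma lipschitzWith_phiE_sub_mul {n d : ℕ} (hn : 0 < n) (hnd : n ≤ d) {CK : ℝ} {K : Euc d → ℝ}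
    (hK : IsCZKernel n d CK K) {φR : ℝ → ℝ} (hφ : IsCutoff n φR) {L : ℝ≥0}
    (hL : LipschitzWith L fun u => u * deriv φR u) {r ε δ : ℝ} (hr : 0 < r) (hrε : r ≤ ε)
    (hεδ : ε ≤ δ) (hδ : δ ≤ 2 * r) :
    LipschitzWith (L * CK * (18 * √n + 1) * (δ - ε) / r ^ (n + 2)).toNNReal
      fun w => (phiE n d hnd φR ε w - phiE n d hnd φR δ w) * K w := by
  have hε : 0 < ε := hr.trans_le hrε
  have hδ' : 0 < δ := hε.trans_le hεδ
  have hs : 1 ≤ √n := Real.one_le_sqrt.mpr (by exact_mod_cast hn)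
  set g : ℝ → ℝ := fun t => φR (t / ε) - φR (t / δ)
  set c : ℝ≥0 := L * ‖ε⁻¹ - δ⁻¹‖₊
  have hg : LipschitzWith c g :=
    lipschitzWith_sub_comp_div (hφ.smooth.differentiable (by norm_num)) hL
      (hφ.deriv_eq_zero_of_lt (by positivity)) hε hδ'
  have hΔ : LipschitzWith c fun w => g ‖projn n d hnd w‖ := by
    have := hg.comp (lipschitzWith_norm_projn n d hnd)
    rwa [mul_one] at this
  have hΔ_le : ∀ w, |g ‖projn n d hnd w‖| ≤ 3 * √n * δ * c := fun w => by
    rcases le_or_gt (3 * √n * δ) ‖projn n d hnd w‖ with h | h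
    · rw [show g _ = 0 from hφ.sub_comp_div_eq_zero_of_le hε hεδ h, abs_zero]; positivity
    · have := hg.dist_le_mul ‖projn n d hnd w‖ 0
      simp only [g, zero_div, sub_self, dist_zero_right, Real.norm_eq_abs, abs_norm] at this
      nlinarith [c.2]
  have hΔ_zero : ∀ w : Euc d, ‖w‖ < 2 * r → g ‖projn n d hnd w‖ = 0 := fun w hw =>
    hφ.sub_comp_div_eq_zero_of_lt hε hεδ (by nlinarith [norm_projn_le n d hnd w])
  refine (lipschitzWith_mul_of_eq_zero_near_zero hr hΔ_le hΔ hΔ_zero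
    (fun w hw => hK.diff w (norm_pos_iff.mp (hr.trans_le hw))) (fun _ => hK.abs_le_of_le_norm hr)
    (fun _ => hK.norm_fderiv_le_of_le_norm hr)).weaken (Real.toNNReal_le_toNNReal ?_)
  have hc : (c : ℝ) ≤ L * (δ - ε) / r ^ 2 := by
    rw [NNReal.coe_mul, mul_div_assoc]
    exact mul_le_mul_of_nonneg_left (nnnorm_inv_sub_inv_le hr hrε hεδ) L.2
  have hCK := hK.pos.le
  calc 2 * (3 * √n * δ * c) * (CK / r ^ n) / r + 3 * √n * δ * c * (CK / r ^ (n + 1))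
        + CK / r ^ n * c
      = c * CK * (9 * √n * δ / r + 1) / r ^ n := by field_simp; ring
    _ ≤ L * (δ - ε) / r ^ 2 * CK * (9 * √n * (2 * r) / r + 1) / r ^ n := by gcongr
    _ = L * CK * (18 * √n + 1) * (δ - ε) / r ^ (n + 2) := by field_simp; ring

lemma lipschitzWith_phiE_sub_mul_of_dyadic {n d : ℕ} (hn : 0 < n) (hnd : n ≤ d) {CK : ℝ}
    {K : Euc d → ℝ} (hK : IsCZKernel n d CK K) {φR : ℝ → ℝ} (hφ : IsCutoff n φR) {L : ℝ≥0}
    (hL : LipschitzWith L fun u => u * deriv φR u) {j : ℤ} {ε δ : ℝ}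
    (hε : (2 : ℝ) ^ (-j - 1) ≤ ε) (hεδ : ε ≤ δ) (hδ : δ ≤ (2 : ℝ) ^ (-j)) :
    LipschitzWith
      (L * CK * (18 * √n + 1) * 2 ^ (n + 2) * 2 ^ (j * ((n : ℤ) + 2)) * (δ - ε)).toNNReal
      fun w => (phiE n d hnd φR ε w - phiE n d hnd φR δ w) * K w := by
  have h2r : (2 : ℝ) ^ (-j) = 2 * 2 ^ (-j - 1) := by
    rw [← zpow_one_add₀ two_ne_zero, add_sub_cancel]
  have hpow : (((2 : ℝ) ^ (-j - 1)) ^ (n + 2))⁻¹ = 2 ^ (n + 2) * 2 ^ (j * ((n : ℤ) + 2)) := by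
    rw [← zpow_natCast, ← zpow_mul, ← zpow_neg, ← zpow_natCast, ← zpow_add₀ two_ne_zero]
    congr 1; push_cast; ring
  convert lipschitzWith_phiE_sub_mul hn hnd hK hφ hL (by positivity) hε hεδ (h2r ▸ hδ) using 2
  rw [div_eq_mul_inv, hpow]; ring

lemma ofReal_abs_integral_sub_le_mul_wdist {d : ℕ} {F : Euc d → ℝ} {M : ℝ≥0} (hM : 0 < M)
    (hF : LipschitzWith M F) {S : Set (Euc d)} (hS : Function.support F ⊆ S)
    (μ ν : Measure (Euc d)) :
    ENNReal.ofReal |(∫ y, F y ∂μ) - ∫ y, F y ∂ν| ≤ M * wdist d S μ ν := by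
  set g : Euc d → ℝ := fun y => (M : ℝ)⁻¹ • F y
  have hg : LipschitzWith 1 g := LipschitzWith.of_dist_le_mul fun y₁ y₂ => by
    rw [dist_smul₀, norm_inv, NNReal.norm_eq, NNReal.coe_one, one_mul,
      inv_mul_le_iff₀ (NNReal.coe_pos.mpr hM)]
    exact hF.dist_le_mul y₁ y₂
  have hgS : Function.support g ⊆ S := (Function.support_const_smul_subset (M : ℝ)⁻¹ F).trans hS
  have hFg : |(∫ y, F y ∂μ) - ∫ y, F y ∂ν| = M * |(∫ y, g y ∂μ) - ∫ y, g y ∂ν| := by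
    simp only [g, smul_eq_mul, integral_const_mul, ← mul_sub, abs_mul, abs_inv, NNReal.abs_eq]
    field_simp
  rw [hFg, ENNReal.ofReal_mul M.coe_nonneg, ENNReal.ofReal_coe_nnreal]
  refine mul_le_mul_right ?_ _
  unfold wdist
  exact le_iSup₂_of_le g hg (le_iSup_of_le hgS le_rfl)

theorem short_variation_term_bound_general
    (n d : ℕ) (hn : 0 < n) (hnd : n < d)
    (CK : ℝ) (K : Euc d → ℝ) (hK : IsCZKernel n d CK K)
    (φR : ℝ → ℝ) (hφ : IsCutoff n φR)
    (C₀ : ℝ) (LA : ℝ≥0) :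
    ∃ CΓ₀ C : ℝ, 0 < CΓ₀ ∧ 0 < C ∧
      ∀ CΓ : ℝ, CΓ₀ ≤ CΓ →
        ∀ (aP : Euc n) (bP : ℝ), 0 < bP →
          ∀ (A : Euc n → Euc (d - n)), LipschitzWith LA A →
            Function.support A ⊆ cubeSet n aP bP →
            ∀ f : Euc d → ℝ, Measurable f →
              (∀ x : Euc d, projn n d hnd.le x ∉ cubeSet n aP bP → f x = 1) →
              (∀ x : Euc d, projn n d hnd.le x ∈ cubeSet n aP bP → C₀⁻¹ ≤ f x ∧ f x ≤ C₀) →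
              ∀ (j : ℤ) (z : Euc n) (x : Euc d),
                x ∈ msupport d (lipGraphMeasure n d hnd.le A f) →
                x ∈ vQ n d hnd.le z ((2 : ℝ) ^ (-j)) →
                ∀ ε δ : ℝ, (2 : ℝ) ^ (-j - 1) ≤ ε → ε ≤ δ → δ < (2 : ℝ) ^ (-j) →
                  ∀ (c : ℝ≥0) (L : Set (Euc d)), IsNPlane n d L →
                    ENNReal.ofReal
                        |(∫ y, (phiE n d hnd.le φR ε (x - y) -
                              phiE n d hnd.le φR δ (x - y)) * K (x - y)
                            ∂(lipGraphMeasure n d hnd.le A f)) -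
                          ∫ y, (phiE n d hnd.le φR ε (x - y) -
                              phiE n d hnd.le φR δ (x - y)) * K (x - y)
                            ∂((c : ℝ≥0∞) • (μH[(n : ℝ)]).restrict L)|
                      ≤ ENNReal.ofReal (C * (2 : ℝ) ^ (j * ((n : ℤ) + 2)) * (δ - ε)) *
                          wdist d (BQ n d hnd.le CΓ z ((2 : ℝ) ^ (-j)))
                            (lipGraphMeasure n d hnd.le A f)
                            ((c : ℝ≥0∞) • (μH[(n : ℝ)]).restrict L) := by
  obtain ⟨Lφ, hLφ⟩ := hφ.exists_lipschitzWith_mul_deriv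
  have hs : 0 < √n := Real.sqrt_pos.mpr (by exact_mod_cast hn)
  have hCK := hK.pos
  refine ⟨4 * √n, (Lφ + 1) * CK * (18 * √n + 1) * 2 ^ (n + 2), by positivity, by positivity, ?_⟩
  intro CΓ hCΓ _ _ _ A _ _ f _ _ _ j z x _ hx ε δ hε hεδ hδ c L _
  rcases hεδ.eq_or_lt with rfl | hεδ'
  · simp
  have hF := (lipschitzWith_phiE_sub_mul_of_dyadic hn hnd.le hK hφ
    (hLφ.weaken (le_add_of_nonneg_right zero_le_one)) hε hεδ hδ.le).comp
    (IsometryEquiv.constVSub x).isometry.lipschitz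
  rw [mul_one] at hF
  have hℓ : (0 : ℝ) < 2 ^ (-j) := by positivity
  have hsupp : Function.support (fun y => (phiE n d hnd.le φR ε (x - y) -
      phiE n d hnd.le φR δ (x - y)) * K (x - y)) ⊆ BQ n d hnd.le CΓ z ((2 : ℝ) ^ (-j)) :=
    fun y hy => mem_BQ_of_mem_vQ hx (hφ.norm_projn_lt_of_phiE_sub_mul_ne_zero hnd.le
      ((by positivity : (0 : ℝ) < 2 ^ (-j - 1)).trans_le hε) hεδ hy).le
      (by nlinarith [mul_le_mul_of_nonneg_right hCΓ hℓ.le, mul_le_mul_of_nonneg_left hδ.le hs.le])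
  exact ofReal_abs_integral_sub_le_mul_wdist (Real.toNNReal_pos.mpr (by positivity)) hF hsupp _ _

/-- (Estimate (5.4).) For `C_Γ` large enough (depending only on `n`), a
v-cube `D` of side `2^{-j}`, `x ∈ supp μ ∩ D`, `2^{-j-1} ≤ ε ≤ δ < 2^{-j}` and a flat
measure `σ = c H^n_L`,
`|∫ (φ_ε − φ_δ)(x−y) K(x−y) d(μ−σ)(y)| ≤ C 2^{j(n+2)} (δ−ε) dist_{B_D}(μ,σ)`, with `C`
depending only on `n, d, K, φ_ℝ`. -/
theorem short_variation_term_bound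
    (n d : ℕ) (hn : 0 < n) (hnd : n < d)
    (CK : ℝ) (K : Euc d → ℝ) (hK : IsCZKernel n d CK K)
    (φR : ℝ → ℝ) (hφ : IsCutoff n φR)
    (C₀ : ℝ) (hC₀ : 0 < C₀) (LA : ℝ≥0) :
    ∃ CΓ₀ C : ℝ, 0 < CΓ₀ ∧ 0 < C ∧
      ∀ CΓ : ℝ, CΓ₀ ≤ CΓ →
        ∀ (aP : Euc n) (bP : ℝ), 0 < bP →
          ∀ (A : Euc n → Euc (d - n)), LipschitzWith LA A →
            Function.support A ⊆ cubeSet n aP bP →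
            ∀ f : Euc d → ℝ, Measurable f →
              (∀ x : Euc d, projn n d hnd.le x ∉ cubeSet n aP bP → f x = 1) →
              (∀ x : Euc d, projn n d hnd.le x ∈ cubeSet n aP bP → C₀⁻¹ ≤ f x ∧ f x ≤ C₀) →
              ∀ (j : ℤ) (z : Euc n) (x : Euc d),
                x ∈ msupport d (lipGraphMeasure n d hnd.le A f) →
                x ∈ vQ n d hnd.le z ((2 : ℝ) ^ (-j)) →
                ∀ ε δ : ℝ, (2 : ℝ) ^ (-j - 1) ≤ ε → ε ≤ δ → δ < (2 : ℝ) ^ (-j) →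
                  ∀ (c : ℝ≥0) (L : Set (Euc d)), IsNPlane n d L →
                    ENNReal.ofReal
                        |(∫ y, (phiE n d hnd.le φR ε (x - y) -
                              phiE n d hnd.le φR δ (x - y)) * K (x - y)
                            ∂(lipGraphMeasure n d hnd.le A f)) -
                          ∫ y, (phiE n d hnd.le φR ε (x - y) -
                              phiE n d hnd.le φR δ (x - y)) * K (x - y)
                            ∂((c : ℝ≥0∞) • (μH[(n : ℝ)]).restrict L)|
                      ≤ ENNReal.ofReal (C * (2 : ℝ) ^ (j * ((n : ℤ) + 2)) * (δ - ε)) *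
                          wdist d (BQ n d hnd.le CΓ z ((2 : ℝ) ^ (-j)))
                            (lipGraphMeasure n d hnd.le A f)
                            ((c : ℝ≥0∞) • (μH[(n : ℝ)]).restrict L) :=
  short_variation_term_bound_general n d hn hnd CK K hK φR hφ C₀ LA
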